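/- The function f₂(φ) = csc(φ)(φ - 2 cot(φ) + 2 φ cot²(φ)) satisfies |f₂(φ)| ≤ π/2 for all φ ∈ (-π/2, π/2] with φ ≠ 0, and f₂ is the derivative of f₁(φ) = csc²(φ)(sin(φ) - φ cos(φ)) on this domain. -/

import Mathlib

open Real

/-- `f₁(φ) = csc²(φ)(sin φ - φ cos φ)`. -/
noncomputable def f1 (φ : ℝ) : ℝ := (Real.sin φ - φ * Real.cos φ) / Real.sin φ ^ 2

/-- `f₂(φ) = csc(φ)(φ - 2 cot φ + 2 φ cot² φ)`. -/
noncomputable def f2 (φ : ℝ) : ℝ :=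
  (1 / Real.sin φ) *
    (φ - 2 * (Real.cos φ / Real.sin φ) + 2 * φ * (Real.cos φ / Real.sin φ) ^ 2)

/-!
Clearing denominators, `f₂ φ = (φ (1 + cos² φ) - 2 sin φ cos φ) / sin³ φ`, an even function of `φ`,
so it suffices to bound the numerator by `0 ≤ · ≤ (π / 2) sin³ φ` on `(0, π / 2]`. The lower bound
is `2 |sin φ cos φ| ≤ |sin φ| (1 + cos² φ) ≤ |φ| (1 + cos² φ)`. For the upper bound, on `[0, 1]` the
Taylor bounds `sin x ≥ x - x³/6`, `cos x ≥ 1 - x²/2` already give `f₂ ≤ 1`; on `[1, π / 2]`,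
Jordan's inequality `φ ≤ (π / 2) sin φ` together with `π cos φ ≤ π cos 1 ≤ 2` gives the bound,
which is attained at `φ = π / 2`.
-/

lemma f2_neg (φ : ℝ) : f2 (-φ) = f2 φ := by
  simp only [f2, sin_neg, cos_neg]
  ring

lemma f2_eq_div {φ : ℝ} (hs : sin φ ≠ 0) :
    f2 φ = (φ * (1 + cos φ ^ 2) - 2 * sin φ * cos φ) / sin φ ^ 3 := by
  rw [f2]
  field_simp
  linear_combination φ * sin_sq_add_cos_sq φ

lemma hasDerivAt_f1 {φ : ℝ} (hs : sin φ ≠ 0) : HasDerivAt f1 (f2 φ) φ := by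
  have hnum : HasDerivAt (fun x ↦ sin x - x * cos x) (φ * sin φ) φ :=
    ((hasDerivAt_sin φ).sub ((hasDerivAt_id' φ).mul (hasDerivAt_cos φ))).congr_deriv (by ring)
  refine (hnum.div ((hasDerivAt_sin φ).fun_pow 2) (pow_ne_zero 2 hs)).congr_deriv ?_
  rw [f2]
  field_simp
  ring

lemma two_mul_sin_mul_cos_le (φ : ℝ) : 2 * sin φ * cos φ ≤ |φ| * (1 + cos φ ^ 2) :=
  calc 2 * sin φ * cos φ ≤ |sin φ| * (2 * |cos φ|) := by
        have := le_abs_self (sin φ * cos φ)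
        rw [abs_mul] at this
        linarith
    _ ≤ |sin φ| * (1 + cos φ ^ 2) := by
        gcongr
        nlinarith [sq_nonneg (|cos φ| - 1), sq_abs (cos φ)]
    _ ≤ |φ| * (1 + cos φ ^ 2) := mul_le_mul_of_nonneg_right abs_sin_le_abs (by positivity)

lemma mul_one_add_cos_sq_sub_le_sin_pow_three {x : ℝ} (h0 : 0 ≤ x) (h1 : x ≤ 1) :
    x * (1 + cos x ^ 2) - 2 * sin x * cos x ≤ sin x ^ 3 := by
  have hs : x - x ^ 3 / 6 ≤ sin x := sin_ge_sub_cube h0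
  have hc : 1 - x ^ 2 / 2 ≤ cos x := one_sub_sq_div_two_le_cos
  have hx2 : x ^ 2 ≤ 1 := pow_le_one₀ h0 h1
  have hs0 : 5 / 6 * x ≤ x - x ^ 3 / 6 := by nlinarith
  have hc0 : 0 ≤ 1 - x ^ 2 / 2 := by linarith
  calc x * (1 + cos x ^ 2) - 2 * sin x * cos x = 2 * x - x * sin x ^ 2 - 2 * sin x * cos x := by
        linear_combination x * sin_sq_add_cos_sq x
    _ ≤ 2 * x - x * (x - x ^ 3 / 6) ^ 2 - 2 * (x - x ^ 3 / 6) * (1 - x ^ 2 / 2) := by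
        have := mul_le_mul hs hc hc0 (by linarith)
        nlinarith [mul_le_mul hs hs (by linarith) (by linarith)]
    _ = x ^ 3 / 3 + x ^ 5 / 6 - x ^ 7 / 36 := by ring
    _ ≤ (5 / 6 * x) ^ 3 := by nlinarith [pow_nonneg h0 3, pow_nonneg h0 5, pow_nonneg h0 7]
    _ ≤ sin x ^ 3 := by gcongr; linarith

lemma mul_one_add_sq_sub_le_of_pi_mul_le_two {x s c : ℝ} (hxs : x ≤ π / 2 * s) (hs : 0 ≤ s)
    (hc : 0 ≤ c) (hπc : π * c ≤ 2) (hsc : s ^ 2 + c ^ 2 = 1) :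
    x * (1 + c ^ 2) - 2 * s * c ≤ π / 2 * s ^ 3 :=
  calc x * (1 + c ^ 2) - 2 * s * c ≤ π / 2 * s * (1 + c ^ 2) - 2 * s * c := by
        gcongr
    _ = π / 2 * s * (1 - c ^ 2) - s * c * (2 - π * c) := by ring
    _ ≤ π / 2 * s * (1 - c ^ 2) := by
        have := mul_nonneg (mul_nonneg hs hc) (sub_nonneg.2 hπc)
        linarith
    _ = π / 2 * s ^ 3 := by rw [← hsc]; ring

lemma mul_one_add_cos_sq_sub_le_pi_div_two_mul {φ : ℝ} (h0 : 0 ≤ φ) (h1 : φ ≤ π / 2) :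
    φ * (1 + cos φ ^ 2) - 2 * sin φ * cos φ ≤ π / 2 * sin φ ^ 3 := by
  have hs : 0 ≤ sin φ := sin_nonneg_of_nonneg_of_le_pi h0 (by linarith [pi_pos])
  rcases le_total φ 1 with hφ | hφ
  · calc _ ≤ sin φ ^ 3 := mul_one_add_cos_sq_sub_le_sin_pow_three h0 hφ
      _ ≤ π / 2 * sin φ ^ 3 := le_mul_of_one_le_left (by positivity) (by linarith [pi_gt_three])
  · refine mul_one_add_sq_sub_le_of_pi_mul_le_two ?_ hs (cos_nonneg_of_mem_Icc ⟨by linarith, h1⟩)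
      ?_ (sin_sq_add_cos_sq φ)
    · calc φ = π / 2 * (2 / π * φ) := by field_simp
        _ ≤ π / 2 * sin φ := by gcongr; exact mul_le_sin h0 h1
    · have := cos_le_cos_of_nonneg_of_le_pi zero_le_one (by linarith [pi_pos]) hφ
      nlinarith [cos_one_le, pi_lt_d2, pi_pos]

lemma f2_mem_Icc {φ : ℝ} (h0 : 0 < φ) (h1 : φ ≤ π / 2) : f2 φ ∈ Set.Icc 0 (π / 2) := by
  have hs : 0 < sin φ := sin_pos_of_pos_of_lt_pi h0 (by linarith [pi_pos])
  rw [f2_eq_div hs.ne', Set.mem_Icc, div_le_iff₀ (by positivity)]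
  refine ⟨div_nonneg ?_ (by positivity), mul_one_add_cos_sq_sub_le_pi_div_two_mul h0.le h1⟩
  have := two_mul_sin_mul_cos_le φ
  rw [abs_of_pos h0] at this
  linarith

theorem f2_bound_and_deriv :
    ∀ φ ∈ Set.Ioc (-(π / 2)) (π / 2), φ ≠ 0 →
      |f2 φ| ≤ π / 2 ∧ HasDerivAt f1 (f2 φ) φ := by
  rintro φ ⟨hl, hr⟩ hφ0
  have hbound : f2 |φ| ∈ Set.Icc 0 (π / 2) :=
    f2_mem_Icc (abs_pos.2 hφ0) (abs_le.2 ⟨by linarith, hr⟩)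
  have heven : f2 |φ| = f2 φ := by
    rcases abs_choice φ with h | h <;> rw [h]
    exact f2_neg φ
  rw [heven] at hbound
  refine ⟨abs_le.2 ⟨by linarith [hbound.1, pi_pos], hbound.2⟩, hasDerivAt_f1 ?_⟩
  exact mt (sin_eq_zero_iff_of_lt_of_lt (by linarith [pi_pos]) (by linarith [pi_pos])).1 hφ0
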